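/- Fix β>0 and θ∈ℝ. Then: (i) for every r>0 and t≥0, c^θ_r > −c̃^θ_t and u^θ(c^θ_r, t) = c^θ_{t+r}; (ii) for every r>0 and t>0, −c̃^θ_{t+r} > −c̃^θ_t and u^θ(−c̃^θ_{t+r}, t) = −c̃^θ_r; (iii) for every t>0, −2θ > −c̃^θ_t and u^θ(−2θ, t) = −2θ. -/

import Mathlib

open MeasureTheory Filter

/-- `c^θ_t` from the paper, with time-scale parameter `β`. -/
noncomputable def cc (β θ t : ℝ) : ℝ :=
  if θ = 0 then 1 / (β * t) else 2 * θ / (Real.exp (2 * β * θ * t) - 1)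

/-- `c̃^θ_t` from the paper. -/
noncomputable def cct (β θ t : ℝ) : ℝ :=
  if θ = 0 then 1 / (β * t) else 2 * θ / (1 - Real.exp (-(2 * β * θ * t)))

/-- `u^θ(λ, t)` from the paper. -/
noncomputable def uu (β θ l t : ℝ) : ℝ :=
  if t = 0 then l else l * cc β θ t / (cct β θ t + l)

/-- entrance density `q^θ_t(x)`. -/
noncomputable def qe (β θ t x : ℝ) : ℝ :=
  cc β θ t * cct β θ t * Real.exp (-(cct β θ t * x))

/-- transition density `q^θ_t(x, y)`. -/
noncomputable def qt (β θ t x y : ℝ) : ℝ :=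
  x * cc β θ t * cct β θ t * Real.exp (-((x + y) * cc β θ t) - 2 * θ * y) *
    ∑' k : ℕ, (x * y * cc β θ t * cct β θ t) ^ k /
      ((Nat.factorial k : ℝ) * (Nat.factorial (k + 1) : ℝ))

/-- the space-time harmonic function `m^{α,θ}(t, z)`. -/
noncomputable def mm (β θ α t z : ℝ) : ℝ :=
  z * Real.exp (-(α / cc β θ t)) *
    ∑' i : ℕ, (α * z) ^ i * Real.exp (((i : ℝ) + 1) * (2 * β * θ * t)) /
      ((Nat.factorial i : ℝ) * (Nat.factorial (i + 1) : ℝ))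

/-- the space-time harmonic function `m̃^{α,θ}(t, z)`. -/
noncomputable def mmt (β θ α t z : ℝ) : ℝ :=
  z * Real.exp (2 * θ * z) * Real.exp (-(α / cct β θ t)) *
    ∑' i : ℕ, (α * z) ^ i * Real.exp (-(((i : ℝ) + 1) * (2 * β * θ * t))) /
      ((Nat.factorial i : ℝ) * (Nat.factorial (i + 1) : ℝ))

/-!
Since `c̃^θ_s = c^θ_s + 2θ`, each of the three identities, after clearing the denominator of
`u^θ`, is the addition formula `c^θ_{t+r} (c^θ_t + c^θ_r + 2θ) = c^θ_t c^θ_r`. The same formula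
exhibits `c^θ_{t+r}` as `c^θ_t` times a factor in `(0, 1)`, which gives the monotonicity of `c̃^θ`
in (ii); positivity of `c̃^θ` is positivity of `c^{-θ} = c̃^θ`.
-/

section

variable {β θ : ℝ}

lemma exp_two_mul_sub_one_ne_zero (hβ : β ≠ 0) (hθ : θ ≠ 0) {s : ℝ} (hs : s ≠ 0) :
    Real.exp (2 * β * θ * s) - 1 ≠ 0 := by
  rw [sub_ne_zero, Ne, Real.exp_eq_one_iff]
  positivity

lemma cc_pos (hβ : 0 < β) {s : ℝ} (hs : 0 < s) : 0 < cc β θ s := by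
  have hβs := mul_pos hβ hs
  rcases lt_trichotomy θ 0 with hθ | rfl | hθ
  · rw [cc, if_neg hθ.ne]
    exact div_pos_of_neg_of_neg (by linarith)
      (sub_neg.2 (Real.exp_lt_one_iff.2 (by nlinarith)))
  · rw [cc, if_pos rfl]
    positivity
  · rw [cc, if_neg hθ.ne']
    exact div_pos (by linarith) (sub_pos.2 (Real.one_lt_exp_iff.2 (by positivity)))

lemma cct_eq_cc_neg (s : ℝ) : cct β θ s = cc β (-θ) s := by
  by_cases hθ : θ = 0
  · simp [cc, cct, hθ]
  · rw [cct, cc, if_neg hθ, if_neg (neg_ne_zero.2 hθ), ← neg_div_neg_eq, neg_sub]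
    ring_nf

lemma cct_pos (hβ : 0 < β) {s : ℝ} (hs : 0 < s) : 0 < cct β θ s := by
  rw [cct_eq_cc_neg]
  exact cc_pos hβ hs

lemma cct_zero : cct β θ 0 = 0 := by
  simp [cct]

lemma cct_eq_cc_add (hβ : β ≠ 0) {s : ℝ} (hs : s ≠ 0) : cct β θ s = cc β θ s + 2 * θ := by
  by_cases hθ : θ = 0
  · simp [cc, cct, hθ]
  · have hE := exp_two_mul_sub_one_ne_zero hβ hθ hs
    have hE₀ := Real.exp_ne_zero (2 * β * θ * s)
    rw [cct, cc, if_neg hθ, if_neg hθ, Real.exp_neg]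
    generalize Real.exp (2 * β * θ * s) = E at hE hE₀ ⊢
    rw [show 1 - E⁻¹ = (E - 1) / E by field_simp]
    field_simp
    ring

/-- Equivalently `1/c_{t+r} = 1/c_t + 1/c_r + 2θ/(c_t c_r)`; for `θ ≠ 0` this is
`e^{2βθ(t+r)} - 1 = (e^{2βθt} - 1) + (e^{2βθr} - 1) + (e^{2βθt} - 1)(e^{2βθr} - 1)`. -/
lemma cc_add_mul (hβ : β ≠ 0) {t r : ℝ} (ht : t ≠ 0) (hr : r ≠ 0) (htr : t + r ≠ 0) :
    cc β θ (t + r) * (cc β θ t + cc β θ r + 2 * θ) = cc β θ t * cc β θ r := by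
  by_cases hθ : θ = 0
  · subst hθ
    simp only [cc, if_true, mul_zero, add_zero]
    field_simp
    ring
  · have hEt := exp_two_mul_sub_one_ne_zero hβ hθ ht
    have hEr := exp_two_mul_sub_one_ne_zero hβ hθ hr
    have hEtr := exp_two_mul_sub_one_ne_zero hβ hθ htr
    have hexp : Real.exp (2 * β * θ * (t + r)) =
        Real.exp (2 * β * θ * t) * Real.exp (2 * β * θ * r) := by
      rw [← Real.exp_add, mul_add]
    simp only [cc, if_neg hθ]
    rw [hexp] at hEtr ⊢
    generalize Real.exp (2 * β * θ * t) = A at hEt hEtr ⊢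
    generalize Real.exp (2 * β * θ * r) = B at hEr hEtr ⊢
    field_simp
    ring

lemma cc_add_lt (hβ : 0 < β) {t r : ℝ} (ht : 0 < t) (hr : 0 < r) :
    cc β θ (t + r) < cc β θ t := by
  have hct := cc_pos (θ := θ) hβ ht
  have hsum : cc β θ t + cc β θ r + 2 * θ = cct β θ t + cc β θ r := by
    rw [cct_eq_cc_add hβ.ne' ht.ne']
    ring
  have hadd := cc_add_mul (θ := θ) hβ.ne' ht.ne' hr.ne' (add_pos ht hr).ne'
  rw [hsum] at hadd
  have hpos : 0 < cct β θ t + cc β θ r := add_pos (cct_pos hβ ht) (cc_pos hβ hr)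
  refine lt_of_mul_lt_mul_right (a := cct β θ t + cc β θ r) ?_ hpos.le
  rw [hadd]
  exact mul_lt_mul_of_pos_left (by linarith [cct_pos (θ := θ) hβ ht]) hct

lemma cct_add_lt (hβ : 0 < β) {t r : ℝ} (ht : 0 < t) (hr : 0 < r) :
    cct β θ (t + r) < cct β θ t := by
  rw [cct_eq_cc_add hβ.ne' (add_pos ht hr).ne', cct_eq_cc_add hβ.ne' ht.ne']
  linarith [cc_add_lt (θ := θ) hβ ht hr]

lemma uu_zero (l : ℝ) : uu β θ l 0 = l := by
  simp [uu]

lemma uu_cc (hβ : 0 < β) {r t : ℝ} (hr : 0 < r) (ht : 0 < t) :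
    uu β θ (cc β θ r) t = cc β θ (t + r) := by
  have hpos : 0 < cct β θ t + cc β θ r := add_pos (cct_pos hβ ht) (cc_pos hβ hr)
  rw [uu, if_neg ht.ne', div_eq_iff hpos.ne', cct_eq_cc_add hβ.ne' ht.ne']
  linear_combination -(cc_add_mul (θ := θ) hβ.ne' ht.ne' hr.ne' (add_pos ht hr).ne')

lemma uu_neg_cct (hβ : 0 < β) {r t : ℝ} (hr : 0 < r) (ht : 0 < t) :
    uu β θ (-cct β θ (t + r)) t = -cct β θ r := by
  have hpos : 0 < cct β θ t + -cct β θ (t + r) := by linarith [cct_add_lt (θ := θ) hβ ht hr]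
  rw [uu, if_neg ht.ne', div_eq_iff hpos.ne', cct_eq_cc_add hβ.ne' ht.ne',
    cct_eq_cc_add hβ.ne' hr.ne', cct_eq_cc_add hβ.ne' (add_pos ht hr).ne']
  linear_combination -(cc_add_mul (θ := θ) hβ.ne' ht.ne' hr.ne' (add_pos ht hr).ne')

lemma uu_neg_two_mul (hβ : 0 < β) {t : ℝ} (ht : 0 < t) :
    uu β θ (-(2 * θ)) t = -(2 * θ) := by
  rw [uu, if_neg ht.ne', cct_eq_cc_add hβ.ne' ht.ne', add_neg_cancel_right,
    mul_div_cancel_right₀ _ (cc_pos hβ ht).ne']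

end

/-- Special values of the flow `u^θ`: (i) `u^θ(c^θ_r, t) = c^θ_{t+r}`,
(ii) `u^θ(-c̃^θ_{t+r}, t) = -c̃^θ_r`, (iii) `u^θ(-2θ, t) = -2θ`,
each point lying in the admissible domain `(-c̃^θ_t, ∞)`. -/
theorem uu_special_values (β θ : ℝ) (hβ : 0 < β) :
    (∀ r : ℝ, 0 < r → ∀ t : ℝ, 0 ≤ t →
      -cct β θ t < cc β θ r ∧ uu β θ (cc β θ r) t = cc β θ (t + r)) ∧
    (∀ r : ℝ, 0 < r → ∀ t : ℝ, 0 < t →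
      -cct β θ t < -cct β θ (t + r) ∧ uu β θ (-cct β θ (t + r)) t = -cct β θ r) ∧
    (∀ t : ℝ, 0 < t →
      -cct β θ t < -(2 * θ) ∧ uu β θ (-(2 * θ)) t = -(2 * θ)) := by
  refine ⟨fun r hr t ht => ?_, fun r hr t ht => ?_, fun t ht => ?_⟩
  · rcases ht.eq_or_lt with rfl | ht
    · simpa [cct_zero, uu_zero] using cc_pos hβ hr
    · exact ⟨by linarith [cct_pos (θ := θ) hβ ht, cc_pos (θ := θ) hβ hr], uu_cc hβ hr ht⟩
  · exact ⟨neg_lt_neg (cct_add_lt hβ ht hr), uu_neg_cct hβ hr ht⟩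
  · refine ⟨?_, uu_neg_two_mul hβ ht⟩
    linarith [cct_eq_cc_add (θ := θ) hβ.ne' ht.ne', cc_pos (θ := θ) hβ ht]
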